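/- arXiv:2206.03512 — 2 statements merged into one kernel-verified Lean document; each statement's English description precedes it below -/
import Mathlib

section
/- Define the transformation Φ(u) = e^{2iω/u}·u^{-2iω}·φ(u). If φ : (0,1) → ℂ is twice differentiable and satisfies [ℓ(ℓ+1)u - s²u² - 4iλ - 16u(1+u)λ²]φ + [u³ + 4iu(1-2u²)λ]φ' - (1-u)u³φ'' = 0 with λ = ω/2, then Φ satisfies [s²u² - ℓ(ℓ+1)u - 2iω]Φ - u(u² - 2iω)Φ' + (1-u)u³Φ'' = 0 on (0,1). -/
/-!
Write `Φ = g φ` with `g u = e^{2iω/u} u^{-2iω}`. The gauge factor satisfies `g' = a g` with the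
rational function `a u = -2iω (1 + u) / u²`, so `Φ' = g (a φ + φ')` and
`Φ'' = g ((a' + a²) φ + 2 a φ' + φ'')`. Substituting, the left-hand side of the
Eddington-Finkelstein equation for `Φ` is `-g` times the left-hand side of the regularized
equation for `φ`, a polynomial identity once the denominators `u²`, `u³` are cleared.
-/

open Complex Filter Topology

section GaugeTransformation

variable {𝕜 𝔸 : Type*} [NontriviallyNormedField 𝕜] [NormedCommRing 𝔸] [NormedAlgebra 𝕜 𝔸]
  {g a φ : 𝕜 → 𝔸} {x : 𝕜}

theorem HasDerivAt.gauge_mul {φ' : 𝔸} (hg : HasDerivAt g (g x * a x) x)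
    (hφ : HasDerivAt φ φ' x) :
    HasDerivAt (fun y => g y * φ y) (g x * (a x * φ x + φ')) x :=
  (hg.mul hφ).congr_deriv (by ring)

theorem deriv_deriv_gauge_mul {a' : 𝔸} (hg : ∀ᶠ y in 𝓝 x, HasDerivAt g (g y * a y) y)
    (ha : HasDerivAt a a' x) (hφ : ∀ᶠ y in 𝓝 x, DifferentiableAt 𝕜 φ y)
    (hφ' : DifferentiableAt 𝕜 (deriv φ) x) :
    deriv (deriv fun y => g y * φ y) x
      = g x * ((a' + a x ^ 2) * φ x + 2 * a x * deriv φ x + deriv (deriv φ) x) := by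
  have hderiv : deriv (fun y => g y * φ y) =ᶠ[𝓝 x] fun y => g y * (a y * φ y + deriv φ y) := by
    filter_upwards [hg, hφ] with y hgy hφy
    exact (hgy.gauge_mul hφy.hasDerivAt).deriv
  rw [hderiv.deriv_eq]
  refine (hg.self_of_nhds.gauge_mul
    ((ha.mul hφ.self_of_nhds.hasDerivAt).add hφ'.hasDerivAt)).deriv.trans ?_
  simp only [Pi.add_apply, Pi.mul_apply]
  ring

end GaugeTransformation

theorem hasDerivAt_exp_div_mul_cpow (c d : ℂ) {z : ℂ} (hz : z ∈ slitPlane) :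
    HasDerivAt (fun w => exp (c / w) * w ^ d) (exp (c / z) * z ^ d * ((d * z - c) / z ^ 2)) z := by
  have hz0 : z ≠ 0 := slitPlane_ne_zero hz
  simp only [div_eq_mul_inv c]
  refine (((hasDerivAt_inv hz0).const_mul c).cexp.mul
    ((hasDerivAt_id' z).cpow_const (c := d) hz)).congr_deriv ?_
  rw [cpow_sub _ _ hz0, cpow_one]
  field_simp
  ring

theorem hasDerivAt_linear_div_sq (c d : ℂ) {z : ℂ} (hz : z ≠ 0) :
    HasDerivAt (fun w => (d * w - c) / w ^ 2) ((2 * c - d * z) / z ^ 3) z := by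
  refine ((((hasDerivAt_id' z).const_mul d).sub_const c).div (hasDerivAt_pow 2 z)
    (pow_ne_zero 2 hz)).congr_deriv ?_
  field_simp
  ring

theorem master_equation_gauge_identity (s ℓ ω u G a a' φ₀ φ₁ φ₂ : ℂ) (hu : u ≠ 0)
    (ha : a = (-2 * I * ω * u - 2 * I * ω) / u ^ 2)
    (ha' : a' = (2 * (2 * I * ω) - -2 * I * ω * u) / u ^ 3) :
    (s ^ 2 * u ^ 2 - ℓ * (ℓ + 1) * u - 2 * I * ω) * (G * φ₀)
        - u * (u ^ 2 - 2 * I * ω) * (G * (a * φ₀ + φ₁))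
        + (1 - u) * u ^ 3 * (G * ((a' + a ^ 2) * φ₀ + 2 * a * φ₁ + φ₂))
      = -G * ((ℓ * (ℓ + 1) * u - s ^ 2 * u ^ 2 - 4 * I * (ω / 2)
          - 16 * u * (1 + u) * (ω / 2) ^ 2) * φ₀
        + (u ^ 3 + 4 * I * u * (1 - 2 * u ^ 2) * (ω / 2)) * φ₁
        - (1 - u) * u ^ 3 * φ₂) := by
  subst ha ha'
  field_simp
  linear_combination (-16 * u ^ 2 * (1 + u) * ω ^ 2 * G * φ₀) * I_sq

open Complex in
/-- If φ satisfies the regularized master equation on (0,1), then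
Φ(u) = e^{2iω/u} u^{-2iω} φ(u) satisfies the Eddington-Finkelstein-form master equation. -/
theorem transformation_master_equation (s ℓ ω : ℂ) (φ : ℝ → ℂ)
    (hφ1 : ∀ u ∈ Set.Ioo (0:ℝ) 1, DifferentiableAt ℝ φ u)
    (hφ2 : ∀ u ∈ Set.Ioo (0:ℝ) 1, DifferentiableAt ℝ (deriv φ) u)
    (hode : ∀ u ∈ Set.Ioo (0:ℝ) 1,
      (ℓ * (ℓ + 1) * u - s ^ 2 * u ^ 2 - 4 * I * (ω / 2)
          - 16 * u * (1 + u) * (ω / 2) ^ 2) * φ u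
        + ((u:ℂ) ^ 3 + 4 * I * u * (1 - 2 * u ^ 2) * (ω / 2)) * deriv φ u
        - (1 - u) * (u:ℂ) ^ 3 * deriv (deriv φ) u = 0) :
    ∀ u ∈ Set.Ioo (0:ℝ) 1,
      (s ^ 2 * u ^ 2 - ℓ * (ℓ + 1) * u - 2 * I * ω)
          * (Complex.exp (2 * I * ω / u) * (u:ℂ) ^ (-2 * I * ω) * φ u)
        - u * ((u:ℂ) ^ 2 - 2 * I * ω)
          * deriv (fun v : ℝ => Complex.exp (2 * I * ω / v) * (v:ℂ) ^ (-2 * I * ω) * φ v) u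
        + (1 - u) * (u:ℂ) ^ 3
          * deriv (deriv (fun v : ℝ => Complex.exp (2 * I * ω / v) * (v:ℂ) ^ (-2 * I * ω) * φ v)) u
        = 0 := by
  intro u hu
  have hu0 : (u : ℂ) ≠ 0 := ofReal_ne_zero.mpr hu.1.ne'
  set a : ℝ → ℂ := fun v => (-2 * I * ω * v - 2 * I * ω) / (v:ℂ) ^ 2
  have hgauge : ∀ᶠ v : ℝ in 𝓝 u, HasDerivAt (fun v : ℝ => exp (2 * I * ω / v) * (v:ℂ) ^ (-2 * I * ω))
      (exp (2 * I * ω / v) * (v:ℂ) ^ (-2 * I * ω) * a v) v := by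
    filter_upwards [Ioi_mem_nhds hu.1] with v hv
    exact (hasDerivAt_exp_div_mul_cpow _ _ (ofReal_mem_slitPlane.mpr hv)).comp_ofReal
  have hφ : ∀ᶠ v in 𝓝 u, DifferentiableAt ℝ φ v :=
    eventually_of_mem (isOpen_Ioo.mem_nhds hu) hφ1
  rw [(hgauge.self_of_nhds.gauge_mul (hφ1 u hu).hasDerivAt).deriv,
    deriv_deriv_gauge_mul hgauge (hasDerivAt_linear_div_sq _ _ hu0).comp_ofReal hφ (hφ2 u hu),
    master_equation_gauge_identity s ℓ ω u _ _ _ _ _ _ hu0 rfl rfl, hode u hu, mul_zero]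
end

section
/- Let λ₀, s₀ : (a,b) → ℂ be smooth with λ₀ nowhere zero, and define recursively λ_k = λ'_{k-1} + s_{k-1} + λ₀·λ_{k-1} and s_k = s'_{k-1} + s₀·λ_{k-1} for k ≥ 1. If for some n > 0 the ratio α := s_n/λ_n = s_{n-1}/λ_{n-1} is constant along (a,b) (i.e., s_nλ_{n-1} - λ_n s_{n-1} = 0 with λ_{n-1}, λ_n nowhere zero), then y(x) = exp(-∫ α dt) is a solution of the ODE y'' - λ₀y' - s₀y = 0. -/
/-- AIM theorem: if the quantization condition s_n λ_{n-1} - λ_n s_{n-1} = 0 holds on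
(a,b) with common ratio α = s_n/λ_n = s_{n-1}/λ_{n-1}, then
y(x) = exp(-∫ α) solves y'' - λ₀ y' - s₀ y = 0 on (a,b). -/
theorem aim_theorem (a b : ℝ) (lam0 s0 : ℝ → ℂ)
    (hlam0 : ContDiffOn ℝ (⊤ : ℕ∞) lam0 (Set.Ioo a b))
    (hs0 : ContDiffOn ℝ (⊤ : ℕ∞) s0 (Set.Ioo a b))
    (hlam0ne : ∀ x ∈ Set.Ioo a b, lam0 x ≠ 0)
    (lam s : ℕ → ℝ → ℂ)
    (hl0 : lam 0 = lam0) (hs0' : s 0 = s0)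
    (hlrec : ∀ k x, x ∈ Set.Ioo a b →
      lam (k + 1) x = deriv (lam k) x + s k x + lam0 x * lam k x)
    (hsrec : ∀ k x, x ∈ Set.Ioo a b →
      s (k + 1) x = deriv (s k) x + s0 x * lam k x)
    (n : ℕ) (hn : 0 < n)
    (hlamne : ∀ x ∈ Set.Ioo a b, lam n x ≠ 0 ∧ lam (n - 1) x ≠ 0)
    (hquant : ∀ x ∈ Set.Ioo a b, s n x * lam (n - 1) x - lam n x * s (n - 1) x = 0)
    (α : ℝ → ℂ) (hα : ∀ x ∈ Set.Ioo a b, α x = s n x / lam n x)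
    (x₀ : ℝ) (hx₀ : x₀ ∈ Set.Ioo a b)
    (y : ℝ → ℂ) (hy : ∀ x, y x = Complex.exp (-(∫ t in x₀..x, α t))) :
    ∀ x ∈ Set.Ioo a b,
      deriv (deriv y) x - lam0 x * deriv y x - s0 x * y x = 0 := by
  obtain ⟨m, rfl⟩ : ∃ m, n = m + 1 := ⟨n - 1, (Nat.succ_pred_eq_of_pos hn).symm⟩
  simp only [Nat.add_sub_cancel] at hlamne hquant
  set I := Set.Ioo a b with hI
  have hIopen : IsOpen I := isOpen_Ioo
  -- smoothness of all iterates
  have hsmooth : ∀ k, ContDiffOn ℝ (⊤ : ℕ∞) (lam k) I ∧ ContDiffOn ℝ (⊤ : ℕ∞) (s k) I := by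
    intro k
    induction k with
    | zero =>
      exact ⟨hlam0.congr fun x _ => congrFun hl0 x, hs0.congr fun x _ => congrFun hs0' x⟩
    | succ k ih =>
      obtain ⟨hlk, hsk⟩ := ih
      have hd : ContDiffOn ℝ (⊤ : ℕ∞) (deriv (lam k)) I := hlk.deriv_of_isOpen hIopen (by simp)
      have hds : ContDiffOn ℝ (⊤ : ℕ∞) (deriv (s k)) I := hsk.deriv_of_isOpen hIopen (by simp)
      exact ⟨((hd.add hsk).add (hlam0.mul hlk)).congr fun x hx => hlrec k x hx,
        (hds.add (hs0.mul hlk)).congr fun x hx => hsrec k x hx⟩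
  have hdiffat : ∀ k, ∀ x ∈ I, DifferentiableAt ℝ (lam k) x ∧ DifferentiableAt ℝ (s k) x := by
    intro k x hx
    exact ⟨((hsmooth k).1.differentiableOn (by simp)).differentiableAt (hIopen.mem_nhds hx),
      ((hsmooth k).2.differentiableOn (by simp)).differentiableAt (hIopen.mem_nhds hx)⟩
  -- α agrees with s m / lam m on I
  have hαeq : Set.EqOn α (fun t => s m t / lam m t) I := by
    intro t ht
    rw [hα t ht]
    rw [div_eq_div_iff (hlamne t ht).1 (hlamne t ht).2]
    linear_combination hquant t ht
  have hqsm : ContDiffOn ℝ (⊤ : ℕ∞) (fun t => s m t / lam m t) I :=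
    ((hsmooth m).2.mul ((hsmooth m).1.inv fun t ht => (hlamne t ht).2)).congr
      fun t _ => div_eq_mul_inv _ _
  have hαsm : ContDiffOn ℝ (⊤ : ℕ∞) α I := hqsm.congr hαeq
  have hαcont : ContinuousOn α I := hαsm.continuousOn
  -- derivative of α on I
  have hαderiv : ∀ x ∈ I, HasDerivAt α
      ((deriv (s m) x * lam m x - s m x * deriv (lam m) x) / lam m x ^ 2) x := by
    intro x hx
    have hq : HasDerivAt (fun t => s m t / lam m t)
        ((deriv (s m) x * lam m x - s m x * deriv (lam m) x) / lam m x ^ 2) x :=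
      ((hdiffat m x hx).2.hasDerivAt).div ((hdiffat m x hx).1.hasDerivAt) (hlamne x hx).2
    exact hq.congr_of_eventuallyEq (hαeq.eventuallyEq_of_mem (hIopen.mem_nhds hx))
  -- derivative of y on I
  have hyfun : y = fun u => Complex.exp (-(∫ t in x₀..u, α t)) := funext hy
  have hyderiv : ∀ u ∈ I, HasDerivAt y (y u * (-(α u))) u := by
    intro u hu
    have hsub : Set.uIcc x₀ u ⊆ I := Set.ordConnected_Ioo.uIcc_subset hx₀ hu
    have hint : IntervalIntegrable α MeasureTheory.volume x₀ u :=
      (hαcont.mono hsub).intervalIntegrable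
    have hmeas : StronglyMeasurableAtFilter α (nhds u) :=
      hαcont.stronglyMeasurableAtFilter hIopen u hu
    have hF : HasDerivAt (fun v => ∫ t in x₀..v, α t) (α u) u :=
      intervalIntegral.integral_hasDerivAt_right hint hmeas (hαcont.continuousAt (hIopen.mem_nhds hu))
    have := (hF.neg).cexp
    rw [hyfun]
    simpa [hy u, mul_comm] using this
  intro x hx
  -- second derivative
  have hEq : Set.EqOn (deriv y) (fun t => y t * (-(α t))) I := fun t ht => (hyderiv t ht).deriv
  set D := (deriv (s m) x * lam m x - s m x * deriv (lam m) x) / lam m x ^ 2 with hDdef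
  have hg : HasDerivAt (fun t => y t * (-(α t)))
      ((y x * (-(α x))) * (-(α x)) + y x * (-D)) x :=
    (hyderiv x hx).mul ((hαderiv x hx).neg)
  have h2 : deriv (deriv y) x = (y x * (-(α x))) * (-(α x)) + y x * (-D) := by
    have : deriv y =ᶠ[nhds x] fun t => y t * (-(α t)) :=
      hEq.eventuallyEq_of_mem (hIopen.mem_nhds hx)
    rw [this.deriv_eq, hg.deriv]
  -- key identity
  have hαx : α x = s m x / lam m x := hαeq hx
  have hS' : deriv (s m) x = s (m + 1) x - s0 x * lam m x := by
    rw [hsrec m x hx]; ring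
  have hL' : deriv (lam m) x = lam (m + 1) x - s m x - lam0 x * lam m x := by
    rw [hlrec m x hx]; ring
  have hD : D = α x ^ 2 + lam0 x * α x - s0 x := by
    rw [hDdef, hS', hL', hαx]
    have hq := hquant x hx
    have hL : lam m x ≠ 0 := (hlamne x hx).2
    field_simp
    linear_combination hq
  rw [h2, hEq hx, hD]
  ring
end
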